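/- arXiv:2110.03220 — 3 statements merged into one kernel-verified Lean document; each statement's English description precedes it below -/
import Mathlib

section
/- Let f : ℝⁿ → ℝ ∪ {+∞} be proper, lower semicontinuous and convex, g : ℝⁿ → ℝ differentiable with L-Lipschitz gradient, F = f + g bounded below, and 0 < τ < 1/L. Then the sequence x_{k+1} = Prox_{τf}(x_k − τ∇g(x_k)) satisfies: F(x_k) is non-increasing and convergent. -/
open Filter Topology
open RealInnerProductSpace

/-- Descent lemma for a function with L-Lipschitz gradient. -/
theorem descent_lemma {n : ℕ}
    (g : EuclideanSpace ℝ (Fin n) → ℝ)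
    (g' : EuclideanSpace ℝ (Fin n) → EuclideanSpace ℝ (Fin n)) (L : ℝ)
    (hg : ∀ x, HasGradientAt g (g' x) x)
    (hgL : ∀ x y, ‖g' x - g' y‖ ≤ L * ‖x - y‖)
    (x y : EuclideanSpace ℝ (Fin n)) :
    g y ≤ g x + ⟪g' x, y - x⟫ + L / 2 * ‖y - x‖ ^ 2 := by
  set h : ℝ → EuclideanSpace ℝ (Fin n) := fun t => x + t • (y - x) with hh
  have hder : ∀ t : ℝ, HasDerivAt (fun t => g (h t)) ⟪g' (h t), y - x⟫ t := by
    intro t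
    have h1 : HasDerivAt h (y - x) t := by
      simpa [hh] using ((hasDerivAt_id t).smul_const (y - x)).const_add x
    have h2 : HasFDerivAt g ((InnerProductSpace.toDual ℝ _) (g' (h t))) (h t) :=
      (hasGradientAt_iff_hasFDerivAt.mp (hg (h t)))
    have h3 := h2.comp_hasDerivAt t h1
    simp at h3
    exact h3
  set ψ : ℝ → ℝ := fun t => g (h t) - t * ⟪g' x, y - x⟫ - L / 2 * t ^ 2 * ‖y - x‖ ^ 2 with hψ
  have hψder : ∀ t : ℝ, HasDerivAt ψ
      (⟪g' (h t), y - x⟫ - ⟪g' x, y - x⟫ - L * t * ‖y - x‖ ^ 2) t := by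
    intro t
    have := ((hder t).sub ((hasDerivAt_id t).const_mul (⟪g' x, y - x⟫ : ℝ))).sub
      (((hasDerivAt_pow 2 t).const_mul (L / 2)).mul_const (‖y - x‖ ^ 2))
    have heq : ψ = fun s => g (h s) - (⟪g' x, y - x⟫ : ℝ) * id s - L / 2 * s ^ 2 * ‖y - x‖ ^ 2 := by
      funext s; simp only [hψ, id]; ring
    rw [heq]
    refine this.congr_deriv ?_
    push_cast
    ring_nf
  have hanti : AntitoneOn ψ (Set.Icc (0:ℝ) 1) := by
    apply antitoneOn_of_deriv_nonpos (convex_Icc 0 1)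
    · exact fun t _ => (hψder t).continuousAt.continuousWithinAt
    · exact fun t _ => ((hψder t).differentiableAt).differentiableWithinAt
    · intro t ht
      rw [interior_Icc] at ht
      rw [(hψder t).deriv]
      have h0 : ⟪g' (h t) - g' x, y - x⟫ ≤ L * t * ‖y - x‖ ^ 2 := by
        calc ⟪g' (h t) - g' x, y - x⟫ ≤ ‖g' (h t) - g' x‖ * ‖y - x‖ :=
              real_inner_le_norm _ _
          _ ≤ (L * ‖h t - x‖) * ‖y - x‖ := by
              have := hgL (h t) x
              nlinarith [norm_nonneg (y - x), norm_nonneg (g' (h t) - g' x)]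
          _ = L * t * ‖y - x‖ ^ 2 := by
              have : h t - x = t • (y - x) := by simp [hh]
              rw [this, norm_smul, Real.norm_eq_abs, abs_of_pos ht.1]
              ring
      rw [inner_sub_left] at h0
      linarith
  have := hanti (Set.left_mem_Icc.mpr one_pos.le) (Set.right_mem_Icc.mpr (by norm_num)) one_pos.le
  simp only [hψ, hh] at this
  simp only [one_smul, zero_smul, add_zero, add_sub_cancel, one_pow, one_mul] at this
  linarith [this]


/-- Along the proximal gradient iterates, the objective values `F(x_k)` are non-increasing
and convergent. -/
theorem stmt_3 {n : ℕ}
    (f g : EuclideanSpace ℝ (Fin n) → ℝ)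
    (g' : EuclideanSpace ℝ (Fin n) → EuclideanSpace ℝ (Fin n)) (L τ : ℝ)
    (hf_lsc : LowerSemicontinuous f) (hf_conv : ConvexOn ℝ Set.univ f)
    (hg : ∀ x, HasGradientAt g (g' x) x)
    (hgL : ∀ x y, ‖g' x - g' y‖ ≤ L * ‖x - y‖)
    (hbdd : ∃ m : ℝ, ∀ x, m ≤ f x + g x)
    (hL : 0 < L) (hτ : 0 < τ) (hτL : τ < 1 / L)
    (P : EuclideanSpace ℝ (Fin n) → EuclideanSpace ℝ (Fin n))
    (hP : ∀ x z, (1 / 2) * ‖x - P x‖ ^ 2 + τ * f (P x) ≤ (1 / 2) * ‖x - z‖ ^ 2 + τ * f z)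
    (x : ℕ → EuclideanSpace ℝ (Fin n))
    (hx : ∀ k, x (k + 1) = P (x k - τ • g' (x k))) :
    Antitone (fun k => f (x k) + g (x k)) ∧
      ∃ l : ℝ, Tendsto (fun k => f (x k) + g (x k)) atTop (𝓝 l) := by
  have key : ∀ k : ℕ, f (x (k+1)) + g (x (k+1)) ≤ f (x k) + g (x k) := by
    intro k
    set v := x k - τ • g' (x k) with hv
    set p := x (k + 1) with hp
    have hpv : p = P v := hx k
    -- prox inequality with z = x k
    have h1 := hP v (x k)
    rw [← hpv] at h1
    have hvx : v - x k = -(τ • g' (x k)) := by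
      simp [hv]
    have hvp : v - p = (x k - p) - τ • g' (x k) := by
      simp [hv]; abel
    have hnorm1 : ‖v - x k‖ ^ 2 = τ ^ 2 * ‖g' (x k)‖ ^ 2 := by
      rw [hvx, norm_neg, norm_smul, Real.norm_eq_abs, abs_of_pos hτ, mul_pow]
    have hnorm2 : ‖v - p‖ ^ 2 = ‖x k - p‖ ^ 2 - 2 * (τ * ⟪x k - p, g' (x k)⟫)
        + τ ^ 2 * ‖g' (x k)‖ ^ 2 := by
      rw [hvp, norm_sub_sq_real, real_inner_smul_right, norm_smul, Real.norm_eq_abs,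
        abs_of_pos hτ, mul_pow]
    rw [hnorm1, hnorm2] at h1
    -- f p ≤ f (x k) + ⟪x k - p, g'⟫ - 1/(2τ) ‖x k - p‖²
    have h2 : τ * f p ≤ τ * f (x k) + τ * ⟪x k - p, g' (x k)⟫ - (1/2) * ‖x k - p‖ ^ 2 := by
      nlinarith [h1]
    have h3 : f p ≤ f (x k) + ⟪x k - p, g' (x k)⟫ - (1/(2*τ)) * ‖x k - p‖ ^ 2 := by
      rw [← mul_le_mul_iff_right₀ hτ]
      have key2 : τ * (1/(2*τ) * ‖x k - p‖^2) = 1/2 * ‖x k - p‖^2 := by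
        field_simp
      nlinarith [h2, key2]
    have h4 := descent_lemma g g' L hg hgL (x k) p
    have h5 : ⟪g' (x k), p - x k⟫ = -⟪x k - p, g' (x k)⟫ := by
      rw [real_inner_comm]
      rw [← inner_neg_left]
      congr 1
      abel
    have h6 : ‖p - x k‖ = ‖x k - p‖ := norm_sub_rev _ _
    rw [h5, h6] at h4
    have hLτ : L / 2 ≤ 1 / (2 * τ) := by
      rw [div_le_div_iff₀ (by norm_num) (by positivity)]
      have : τ * L < 1 := by
        rw [lt_div_iff₀ hL] at hτL
        linarith
      nlinarith
    have hprod : 0 ≤ (1/(2*τ) - L/2) * ‖x k - p‖ ^ 2 :=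
      mul_nonneg (by linarith) (sq_nonneg _)
    rw [sub_mul] at hprod
    linarith [h3, h4, hprod]
  have hanti : Antitone (fun k => f (x k) + g (x k)) :=
    antitone_nat_of_succ_le key
  refine ⟨hanti, ⟨⨅ k, (f (x k) + g (x k)), ?_⟩⟩
  apply tendsto_atTop_ciInf hanti
  obtain ⟨m, hm⟩ := hbdd
  exact ⟨m, fun y ⟨k, hk⟩ => hk ▸ hm (x k)⟩
end

section
/- Under the same hypotheses (f proper lsc convex, g differentiable with L-Lipschitz gradient, F = f + g bounded below, 0 < τ < 1/L), the residuals of the proximal gradient iterates satisfy Σ_{k=0}^∞ ‖x_{k+1} − x_k‖² ≤ (F(x_0) − inf F)/(1/(2τ) − L/2); in particular ‖x_{k+1} − x_k‖ → 0. -/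
open Filter Topology


open Filter Topology RealInnerProductSpace

lemma my_descent {n : ℕ} (g : EuclideanSpace ℝ (Fin n) → ℝ)
    (g' : EuclideanSpace ℝ (Fin n) → EuclideanSpace ℝ (Fin n)) (L : ℝ)
    (hg : ∀ x, HasGradientAt g (g' x) x)
    (hgL : ∀ x y, ‖g' x - g' y‖ ≤ L * ‖x - y‖) (hL : 0 ≤ L)
    (y d : EuclideanSpace ℝ (Fin n)) :
    g (y + d) ≤ g y + ⟪g' y, d⟫ + L / 2 * ‖d‖ ^ 2 := by
  have hcont : Continuous g' := by
    apply LipschitzWith.continuous (K := L.toNNReal)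
    apply LipschitzWith.of_dist_le_mul
    intro a b
    simpa [dist_eq_norm, Real.coe_toNNReal L hL] using hgL a b
  have hderiv : ∀ t : ℝ, HasDerivAt (fun t : ℝ => g (y + t • d)) ⟪g' (y + t • d), d⟫ t := by
    intro t
    have h1 : HasDerivAt (fun t : ℝ => y + t • d) d t := by
      simpa using ((hasDerivAt_id t).smul_const d).const_add y
    have h2 : HasFDerivAt g (InnerProductSpace.toDual ℝ _ (g' (y + t • d))) (y + t • d) :=
      hg (y + t • d)
    exact (by simpa using h2.comp_hasDerivAt t h1 :
      HasDerivAt (g ∘ fun t : ℝ => y + t • d) ⟪g' (y + t • d), d⟫ t)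
  have hcontφ : Continuous fun t : ℝ => ⟪g' (y + t • d), d⟫ := by
    exact (hcont.comp (continuous_const.add (continuous_id.smul continuous_const))).inner
      continuous_const
  have hint : g (y + d) - g y = ∫ t in (0:ℝ)..1, ⟪g' (y + t • d), d⟫ := by
    have := intervalIntegral.integral_eq_sub_of_hasDerivAt
      (f := fun t : ℝ => g (y + t • d)) (fun t _ => hderiv t)
      (hcontφ.intervalIntegrable 0 1)
    simpa using this.symm
  have hmono : ∫ t in (0:ℝ)..1, ⟪g' (y + t • d), d⟫ ≤
      ∫ t in (0:ℝ)..1, (⟪g' y, d⟫ + t * (L * ‖d‖ ^ 2)) := by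
    apply intervalIntegral.integral_mono_on (by norm_num) (hcontφ.intervalIntegrable 0 1)
    · exact (continuous_const.add (continuous_id.mul continuous_const)).intervalIntegrable 0 1
    intro t ht
    have h1 : ⟪g' (y + t • d) - g' y, d⟫ ≤ ‖g' (y + t • d) - g' y‖ * ‖d‖ :=
      real_inner_le_norm _ _
    have h2 : ‖g' (y + t • d) - g' y‖ ≤ L * ‖t • d‖ := by simpa using hgL (y + t • d) y
    have h3 : ‖t • d‖ = t * ‖d‖ := by
      rw [norm_smul, Real.norm_eq_abs, abs_of_nonneg ht.1]
    have h4 : ⟪g' (y + t • d), d⟫ = ⟪g' y, d⟫ + ⟪g' (y + t • d) - g' y, d⟫ := by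
      rw [inner_sub_left]; ring
    rw [h3] at h2
    nlinarith [norm_nonneg d, ht.1, mul_le_mul_of_nonneg_right h2 (norm_nonneg d)]
  have hval : ∫ t in (0:ℝ)..1, (⟪g' y, d⟫ + t * (L * ‖d‖ ^ 2)) =
      ⟪g' y, d⟫ + L / 2 * ‖d‖ ^ 2 := by
    have hc2 : Continuous fun t : ℝ => t * (L * ‖d‖ ^ 2) := by fun_prop
    rw [intervalIntegral.integral_add (intervalIntegrable_const)
      (hc2.intervalIntegrable 0 1),
      intervalIntegral.integral_mul_const, integral_id]
    simp
    ring
  linarith [hint, hmono, hval.le, hval.ge]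

lemma my_step {n : ℕ} (f g : EuclideanSpace ℝ (Fin n) → ℝ)
    (g' : EuclideanSpace ℝ (Fin n) → EuclideanSpace ℝ (Fin n)) (L τ : ℝ)
    (hg : ∀ x, HasGradientAt g (g' x) x)
    (hgL : ∀ x y, ‖g' x - g' y‖ ≤ L * ‖x - y‖)
    (hL : 0 < L) (hτ : 0 < τ)
    (P : EuclideanSpace ℝ (Fin n) → EuclideanSpace ℝ (Fin n))
    (hP : ∀ x z, (1 / 2) * ‖x - P x‖ ^ 2 + τ * f (P x) ≤ (1 / 2) * ‖x - z‖ ^ 2 + τ * f z)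
    (y : EuclideanSpace ℝ (Fin n)) :
    f (P (y - τ • g' y)) + g (P (y - τ • g' y)) +
      (1 / (2 * τ) - L / 2) * ‖P (y - τ • g' y) - y‖ ^ 2 ≤ f y + g y := by
  set p := P (y - τ • g' y) with hp
  have hA := hP (y - τ • g' y) y
  have hexp : (y - τ • g' y) - p = (y - p) - τ • g' y := by abel
  have hexp2 : ‖(y - τ • g' y) - p‖ ^ 2 =
      ‖y - p‖ ^ 2 - 2 * (τ * ⟪y - p, g' y⟫) + ‖τ • g' y‖ ^ 2 := by
    rw [hexp, @norm_sub_sq_real, real_inner_smul_right]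
  have hexp3 : ‖(y - τ • g' y) - y‖ ^ 2 = ‖τ • g' y‖ ^ 2 := by
    congr 1; rw [show (y - τ • g' y) - y = -(τ • g' y) by abel, norm_neg]
  rw [hexp2, hexp3] at hA
  -- descent lemma
  have hB : g p ≤ g y + ⟪g' y, p - y⟫ + L / 2 * ‖p - y‖ ^ 2 := by
    have := my_descent g g' L hg hgL hL.le y (p - y)
    simpa using this
  have hinner : ⟪g' y, p - y⟫ = -⟪y - p, g' y⟫ := by
    rw [real_inner_comm, show p - y = -(y - p) by abel, inner_neg_left]
  have hnorm : ‖p - y‖ = ‖y - p‖ := norm_sub_rev _ _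
  rw [hinner, hnorm] at hB
  have hτ2 : τ * (1 / (2 * τ)) = 1 / 2 := by field_simp
  have hgoal : ‖p - y‖ ^ 2 = ‖y - p‖ ^ 2 := by rw [hnorm]
  rw [hgoal]
  nlinarith [hA, hB, sq_nonneg ‖y - p‖, mul_pos hτ hτ]

/-- Summability of the squared residuals of the proximal gradient iterates:
`Σ_k ‖x_{k+1} − x_k‖² ≤ (F(x_0) − inf F)/(1/(2τ) − L/2)`, and in particular
`‖x_{k+1} − x_k‖ → 0`. -/
theorem stmt_5 {n : ℕ}
    (f g : EuclideanSpace ℝ (Fin n) → ℝ)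
    (g' : EuclideanSpace ℝ (Fin n) → EuclideanSpace ℝ (Fin n)) (L τ : ℝ)
    (hf_lsc : LowerSemicontinuous f) (hf_conv : ConvexOn ℝ Set.univ f)
    (hg : ∀ x, HasGradientAt g (g' x) x)
    (hgL : ∀ x y, ‖g' x - g' y‖ ≤ L * ‖x - y‖)
    (hbdd : ∃ m : ℝ, ∀ x, m ≤ f x + g x)
    (hL : 0 < L) (hτ : 0 < τ) (hτL : τ < 1 / L)
    (P : EuclideanSpace ℝ (Fin n) → EuclideanSpace ℝ (Fin n))
    (hP : ∀ x z, (1 / 2) * ‖x - P x‖ ^ 2 + τ * f (P x) ≤ (1 / 2) * ‖x - z‖ ^ 2 + τ * f z)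
    (x : ℕ → EuclideanSpace ℝ (Fin n))
    (hx : ∀ k, x (k + 1) = P (x k - τ • g' (x k))) :
    Summable (fun k => ‖x (k + 1) - x k‖ ^ 2) ∧
    (∑' k : ℕ, ‖x (k + 1) - x k‖ ^ 2) ≤
      ((f (x 0) + g (x 0)) - ⨅ z, (f z + g z)) / (1 / (2 * τ) - L / 2) ∧
    Tendsto (fun k => ‖x (k + 1) - x k‖) atTop (𝓝 0) := by
  set c : ℝ := 1 / (2 * τ) - L / 2 with hc_def
  have hτL' : τ * L < 1 := by
    have := mul_lt_mul_of_pos_right hτL hL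
    rwa [one_div, inv_mul_cancel₀ hL.ne'] at this
  have h2τ : (0:ℝ) < 2 * τ := by linarith
  have hc : 0 < c := by
    rw [hc_def, sub_pos, div_lt_div_iff₀ two_pos h2τ]
    nlinarith
  -- key decrease inequality telescoped
  have key : ∀ N : ℕ,
      (f (x N) + g (x N)) + c * ∑ k ∈ Finset.range N, ‖x (k + 1) - x k‖ ^ 2 ≤
        f (x 0) + g (x 0) := by
    intro N
    induction N with
    | zero => simp
    | succ N ih =>
      have hstep := my_step f g g' L τ hg hgL hL hτ P hP (x N)
      rw [← hx N, ← hc_def] at hstep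
      rw [Finset.sum_range_succ]
      have hnn : 0 ≤ ‖x (N + 1) - x N‖ ^ 2 := sq_nonneg _
      linarith [hstep, ih, mul_nonneg hc.le hnn]
  have hm := hbdd
  obtain ⟨m, hm⟩ := hbdd
  have hbdd' : BddBelow (Set.range fun z => f z + g z) :=
    ⟨m, by rintro _ ⟨z, rfl⟩; exact hm z⟩
  have hinf_le : ∀ N : ℕ, (⨅ z, (f z + g z)) ≤ f (x N) + g (x N) :=
    fun N => ciInf_le hbdd' (x N)
  have hbound : ∀ N : ℕ, ∑ k ∈ Finset.range N, ‖x (k + 1) - x k‖ ^ 2 ≤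
      ((f (x 0) + g (x 0)) - ⨅ z, (f z + g z)) / c := by
    intro N
    rw [le_div_iff₀ hc]
    nlinarith [key N, hinf_le N]
  have hs : Summable (fun k => ‖x (k + 1) - x k‖ ^ 2) :=
    summable_of_sum_range_le (fun k => sq_nonneg _) hbound
  refine ⟨hs, Summable.tsum_le_of_sum_range_le hs hbound, ?_⟩
  have h0 := hs.tendsto_atTop_zero
  have := (Real.continuous_sqrt.continuousAt (x := (0:ℝ))).tendsto.comp h0
  simpa [Function.comp_def, Real.sqrt_sq_eq_abs] using this
end

section
/- Under the same hypotheses (f proper lsc convex, g differentiable with L-Lipschitz gradient, F = f + g bounded below, 0 < τ < 1/L), every cluster point x* of the proximal gradient sequence x_{k+1} = T_τ(x_k), where T_τ = Prox_{τf} ∘ (Id − τ∇g), is a stationary point of F, i.e. −∇g(x*) ∈ ∂f(x*). -/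
/-!
A proximal gradient step `x ↦ P (x - τ ∇g x)` lowers `F = f + g` by at least
`(1/τ - L) ‖step‖²`: the variational inequality characterising the prox point is combined with
the descent lemma for `g`. As `F` is bounded below, the steps tend to `0`. The step map is
continuous, the prox map being nonexpansive, so every cluster point `x*` of the iterates is a fixed
point of it, and the prox variational inequality at a fixed point reads `-∇g x* ∈ ∂f x*`.
-/

open Filter Topology

local notation "⟪" x ", " y "⟫" => @inner ℝ _ _ x y

theorem isFixedPt_of_mapClusterPt_of_tendsto_dist_succ {X : Type*} [MetricSpace X]
    {T : X → X} (hT : Continuous T)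
    {x : ℕ → X} (hx : ∀ k, x (k + 1) = T (x k))
    (hsteps : Tendsto (fun k => dist (x (k + 1)) (x k)) atTop (𝓝 0))
    {a : X} (ha : MapClusterPt a atTop x) : Function.IsFixedPt T a := by
  have hcl : MapClusterPt (dist (T a) a) atTop (fun k => dist (T (x k)) (x k)) :=
    ha.continuousAt_comp (hT.dist continuous_id).continuousAt
  simp only [← hx] at hcl
  have hzero : dist (T a) a = 0 := by
    by_contra hne
    exact clusterPt_iff_not_disjoint.1 hcl
      ((disjoint_nhds_nhds.2 hne).mono_right hsteps)
  exact dist_eq_zero.1 hzero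

theorem tendsto_zero_of_add_mul_sq_le {F d : ℕ → ℝ} {c : ℝ} (hc : 0 < c)
    (hd : ∀ k, 0 ≤ d k) (hF : BddBelow (Set.range F))
    (hdec : ∀ k, F (k + 1) + c * d k ^ 2 ≤ F k) : Tendsto d atTop (𝓝 0) := by
  have hanti : Antitone F :=
    antitone_nat_of_succ_le fun k => by nlinarith [hdec k, sq_nonneg (d k)]
  have hlim := tendsto_atTop_ciInf hanti hF
  have hgap : Tendsto (fun k => (F k - F (k + 1)) / c) atTop (𝓝 0) := by
    simpa using (hlim.sub (hlim.comp (tendsto_add_atTop_nat 1))).div_const c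
  have hsq : Tendsto (fun k => d k ^ 2) atTop (𝓝 0) :=
    squeeze_zero (fun k => sq_nonneg _)
      (fun k => by rw [le_div_iff₀ hc]; linarith [hdec k]) hgap
  simpa [Real.sqrt_sq (hd _)] using hsq.sqrt

section InnerProduct

variable {E : Type*} [NormedAddCommGroup E] [InnerProductSpace ℝ E]

def IsProxMap (h : E → ℝ) (P : E → E) : Prop :=
  ∀ x z, (1 / 2) * ‖x - P x‖ ^ 2 + h (P x) ≤ (1 / 2) * ‖x - z‖ ^ 2 + h z

def HasSubgradientAt (f : E → ℝ) (v a : E) : Prop :=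
  ∀ y, f a + ⟪v, y - a⟫ ≤ f y

namespace IsProxMap

variable {h : E → ℝ} {P : E → E}

theorem add_inner_le (hP : IsProxMap h P) (hh : ConvexOn ℝ Set.univ h) (x y : E) :
    h (P x) + ⟪x - P x, y - P x⟫ ≤ h y := by
  set p := P x
  -- Test the minimality of `p` against points of the segment `[p, y]`, then shrink the segment.
  have hsegment : ∀ t ∈ Set.Ioc (0 : ℝ) 1,
      ⟪x - p, y - p⟫ ≤ h y - h p + t * (‖y - p‖ ^ 2 / 2) := by
    rintro t ⟨ht0, ht1⟩
    have hmin := hP x (p + t • (y - p))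
    have hconv : h (p + t • (y - p)) ≤ (1 - t) * h p + t * h y := by
      rw [show p + t • (y - p) = (1 - t) • p + t • y by module]
      exact hh.2 (Set.mem_univ p) (Set.mem_univ y) (sub_nonneg.2 ht1) ht0.le (by ring)
    have hexpand : ‖x - (p + t • (y - p))‖ ^ 2
        = ‖x - p‖ ^ 2 - 2 * t * ⟪x - p, y - p⟫ + t ^ 2 * ‖y - p‖ ^ 2 := by
      rw [show x - (p + t • (y - p)) = (x - p) - t • (y - p) by abel, norm_sub_sq_real,
        real_inner_smul_right, norm_smul, mul_pow, Real.norm_eq_abs, sq_abs]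
      ring
    rw [hexpand] at hmin
    nlinarith
  have hlim : Tendsto (fun t : ℝ => h y - h p + t * (‖y - p‖ ^ 2 / 2)) (𝓝[>] 0)
      (𝓝 (h y - h p)) := by
    refine tendsto_nhdsWithin_of_tendsto_nhds ?_
    have hcont : Continuous fun t : ℝ => h y - h p + t * (‖y - p‖ ^ 2 / 2) := by fun_prop
    simpa using hcont.tendsto 0
  have := ge_of_tendsto hlim (eventually_of_mem (Ioc_mem_nhdsGT one_pos) hsegment)
  linarith

theorem lipschitzWith_one (hP : IsProxMap h P) (hh : ConvexOn ℝ Set.univ h) :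
    LipschitzWith 1 P := by
  refine LipschitzWith.mk_one fun x y => ?_
  have hx := hP.add_inner_le hh x (P y)
  have hy := hP.add_inner_le hh y (P x)
  have hmono : ‖P x - P y‖ ^ 2 ≤ ⟪x - y, P x - P y⟫ := by
    have : ⟪x - P x, P y - P x⟫ + ⟪y - P y, P x - P y⟫
        = ‖P x - P y‖ ^ 2 - ⟪x - y, P x - P y⟫ := by
      rw [← real_inner_self_eq_norm_sq, ← neg_sub (P x) (P y), inner_neg_right]
      simp only [inner_sub_left, inner_sub_right, real_inner_comm]
      ring
    linarith
  rw [dist_eq_norm, dist_eq_norm]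
  have hcs := real_inner_le_norm (x - y) (P x - P y)
  nlinarith [norm_nonneg (P x - P y), norm_nonneg (x - y)]

theorem hasSubgradientAt_of_apply_eq {f : E → ℝ} {τ : ℝ} (hP : IsProxMap (fun z => τ * f z) P)
    (hf : ConvexOn ℝ Set.univ f) (hτ : 0 < τ) {v a : E} (hfix : P (a - τ • v) = a) :
    HasSubgradientAt f (-v) a := fun y => by
  have hvi := hP.add_inner_le (hf.smul hτ.le) (a - τ • v) y
  rw [hfix, sub_sub_cancel_left, inner_neg_left, real_inner_smul_left] at hvi
  rw [inner_neg_left]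
  nlinarith

end IsProxMap

variable [CompleteSpace E]

theorem abs_sub_sub_inner_le_of_lipschitz_gradient {g : E → ℝ} {g' : E → E} {L : ℝ}
    (hg : ∀ x, HasGradientAt g (g' x) x) (hL : 0 ≤ L)
    (hgL : ∀ x y, ‖g' x - g' y‖ ≤ L * ‖x - y‖) (x y : E) :
    |g y - g x - ⟪g' x, y - x⟫| ≤ L * ‖y - x‖ ^ 2 := by
  have hbound : ∀ z ∈ Metric.closedBall x ‖y - x‖,
      ‖InnerProductSpace.toDual ℝ E (g' z) - InnerProductSpace.toDual ℝ E (g' x)‖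
        ≤ L * ‖y - x‖ := fun z hz => by
    rw [← map_sub, LinearIsometryEquiv.norm_map]
    exact (hgL z x).trans (mul_le_mul_of_nonneg_left (by rwa [← dist_eq_norm]) hL)
  have hmvt := (convex_closedBall x ‖y - x‖).norm_image_sub_le_of_norm_hasFDerivWithin_le'
    (fun z _ => (hg z).hasFDerivAt.hasFDerivWithinAt) hbound
    (Metric.mem_closedBall_self (norm_nonneg _)) (by rw [Metric.mem_closedBall, dist_eq_norm])
  rw [InnerProductSpace.toDual_apply_apply, Real.norm_eq_abs] at hmvt
  linarith

theorem IsProxMap.sufficient_decrease {f g : E → ℝ} {g' : E → E} {L τ : ℝ} {P : E → E}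
    (hP : IsProxMap (fun z => τ * f z) P) (hf : ConvexOn ℝ Set.univ f) (hτ : 0 ≤ τ)
    (hg : ∀ x, HasGradientAt g (g' x) x) (hL : 0 ≤ L)
    (hgL : ∀ x y, ‖g' x - g' y‖ ≤ L * ‖x - y‖) (x : E) :
    τ * (f (P (x - τ • g' x)) + g (P (x - τ • g' x))) + (1 - τ * L) * ‖P (x - τ • g' x) - x‖ ^ 2
      ≤ τ * (f x + g x) := by
  set p := P (x - τ • g' x)
  have hvi := hP.add_inner_le (hf.smul hτ) (x - τ • g' x) x
  have hdescent := (abs_le.1 (abs_sub_sub_inner_le_of_lipschitz_gradient hg hL hgL x p)).2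
  have hinner : ⟪x - τ • g' x - p, x - p⟫ = ‖p - x‖ ^ 2 + τ * ⟪g' x, p - x⟫ := by
    rw [← real_inner_self_eq_norm_sq]
    simp only [inner_sub_left, inner_sub_right, real_inner_smul_left, real_inner_smul_right,
      real_inner_comm]
    ring
  rw [hinner] at hvi
  nlinarith [mul_le_mul_of_nonneg_left hdescent hτ]

end InnerProduct

theorem stmt_7_general {n : ℕ}
    (f g : EuclideanSpace ℝ (Fin n) → ℝ)
    (g' : EuclideanSpace ℝ (Fin n) → EuclideanSpace ℝ (Fin n)) (L τ : ℝ)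
    (hf_conv : ConvexOn ℝ Set.univ f)
    (hg : ∀ x, HasGradientAt g (g' x) x)
    (hgL : ∀ x y, ‖g' x - g' y‖ ≤ L * ‖x - y‖)
    (hbdd : ∃ m : ℝ, ∀ x, m ≤ f x + g x)
    (hL : 0 < L) (hτ : 0 < τ) (hτL : τ < 1 / L)
    (P : EuclideanSpace ℝ (Fin n) → EuclideanSpace ℝ (Fin n))
    (hP : ∀ x z, (1 / 2) * ‖x - P x‖ ^ 2 + τ * f (P x) ≤ (1 / 2) * ‖x - z‖ ^ 2 + τ * f z)
    (x : ℕ → EuclideanSpace ℝ (Fin n))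
    (hx : ∀ k, x (k + 1) = P (x k - τ • g' (x k)))
    (xstar : EuclideanSpace ℝ (Fin n))
    (hcluster : MapClusterPt xstar atTop x) :
    ∀ y, f xstar + ⟪-g' xstar, y - xstar⟫ ≤ f y := by
  have hprox : IsProxMap (fun z => τ * f z) P := hP
  obtain ⟨m, hm⟩ := hbdd
  have hg'_cont : Continuous g' :=
    (LipschitzWith.of_dist_le' fun a b => by simpa only [dist_eq_norm] using hgL a b).continuous
  have hstep_cont : Continuous fun z => P (z - τ • g' z) :=
    (hprox.lipschitzWith_one (hf_conv.smul hτ.le)).continuous.comp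
      (continuous_id.sub (hg'_cont.const_smul τ))
  have hτL' : 0 < 1 - τ * L := by rw [lt_div_iff₀ hL] at hτL; linarith
  have hsteps : Tendsto (fun k => dist (x (k + 1)) (x k)) atTop (𝓝 0) := by
    refine tendsto_zero_of_add_mul_sq_le (F := fun k => τ * (f (x k) + g (x k))) hτL'
      (fun k => dist_nonneg) ⟨τ * m, ?_⟩ fun k => ?_
    · rintro _ ⟨k, rfl⟩
      exact mul_le_mul_of_nonneg_left (hm _) hτ.le
    · rw [hx k, dist_eq_norm]
      exact hprox.sufficient_decrease hf_conv hτ.le hg hL.le hgL (x k)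
  have hfix := isFixedPt_of_mapClusterPt_of_tendsto_dist_succ hstep_cont hx hsteps hcluster
  exact hprox.hasSubgradientAt_of_apply_eq hf_conv hτ hfix

/-- Every cluster point of the proximal gradient sequence is a stationary point of
`F = f + g`, i.e. `−∇g(x*) ∈ ∂f(x*)`. -/
theorem stmt_7 {n : ℕ}
    (f g : EuclideanSpace ℝ (Fin n) → ℝ)
    (g' : EuclideanSpace ℝ (Fin n) → EuclideanSpace ℝ (Fin n)) (L τ : ℝ)
    (hf_lsc : LowerSemicontinuous f) (hf_conv : ConvexOn ℝ Set.univ f)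
    (hg : ∀ x, HasGradientAt g (g' x) x)
    (hgL : ∀ x y, ‖g' x - g' y‖ ≤ L * ‖x - y‖)
    (hbdd : ∃ m : ℝ, ∀ x, m ≤ f x + g x)
    (hL : 0 < L) (hτ : 0 < τ) (hτL : τ < 1 / L)
    (P : EuclideanSpace ℝ (Fin n) → EuclideanSpace ℝ (Fin n))
    (hP : ∀ x z, (1 / 2) * ‖x - P x‖ ^ 2 + τ * f (P x) ≤ (1 / 2) * ‖x - z‖ ^ 2 + τ * f z)
    (x : ℕ → EuclideanSpace ℝ (Fin n))
    (hx : ∀ k, x (k + 1) = P (x k - τ • g' (x k)))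
    (xstar : EuclideanSpace ℝ (Fin n))
    (hcluster : MapClusterPt xstar atTop x) :
    ∀ y, f xstar + ⟪-g' xstar, y - xstar⟫ ≤ f y :=
  stmt_7_general f g g' L τ hf_conv hg hgL hbdd hL hτ hτL P hP x hx xstar hcluster
end
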